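/- Let q ≥ 1, let n and m be natural numbers, let x : Fin m → Fin n → ℤ be a family of vectors with all entries equal to 0 or 1, and let p : Fin n → ℤ. Denote by ⊕x the coordinatewise XOR of the rows x₀,…,x_{m−1} (a 0/1 vector). Then ∑_{c} (⊕x)(c) · p(c) ≡ ∑_{S ⊆ Fin m, 1 ≤ |S| ≤ q} (−1)^{|S|+1} · 2^{|S|−1} · ∑_{c} (∏_{i∈S} x i c) · p(c) (mod 2^q); that is, to evaluate the p-weighted weight of an XOR of rows modulo 2^q, only the terms of the inclusion–exclusion expansion of order at most q are needed. -/

import Mathlib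

/-!
Over `ℤ`, the parity of the number of ones among bits `v i` is encoded by
`∏ i, (1 - 2 v i) = (-1) ^ #{i | v i = 1}`, and expanding the product over subsets gives
`[#{i | v i = 1} odd] = ∑_{S ≠ ∅} (-1)^(|S|+1) 2^(|S|-1) ∏_{i∈S} v i`.
Weighting by `p c` and summing over the coordinates `c` turns this into an exact
inclusion–exclusion formula, whose terms with `|S| > q` carry the factor `2^(|S|-1)`
and so vanish modulo `2^q`.
-/

open Finset

theorem two_mul_ite_odd (k : ℕ) : 2 * (if Odd k then 1 else 0 : ℤ) = 1 - (-1) ^ k := by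
  rcases Nat.even_or_odd k with hk | hk
  · rw [if_neg (Nat.not_odd_iff_even.2 hk), hk.neg_one_pow]; ring
  · rw [if_pos hk, hk.neg_one_pow]; ring

theorem prod_one_sub_two_mul_eq_neg_one_pow {ι R : Type*} [CommRing R] [DecidableEq R]
    (s : Finset ι) (v : ι → R) (hv : ∀ i ∈ s, v i = 0 ∨ v i = 1) :
    ∏ i ∈ s, (1 - 2 * v i) = (-1) ^ #(s.filter (v · = 1)) := by
  rw [← prod_filter_mul_prod_filter_not s (v · = 1)]
  have hzero : ∀ i ∈ s.filter (¬ v · = 1), v i = 0 := fun i hi => by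
    rw [mem_filter] at hi
    exact (hv i hi.1).resolve_right hi.2
  rw [prod_congr rfl fun i hi => by rw [(mem_filter.1 hi).2], prod_const,
    prod_congr rfl fun i hi => by rw [hzero i hi]]
  norm_num

theorem ite_odd_card_eq_sum_powerset {ι : Type*} [Fintype ι] (v : ι → ℤ)
    (hv : ∀ i, v i = 0 ∨ v i = 1) :
    (if Odd #(univ.filter (v · = 1)) then 1 else 0 : ℤ) =
      ∑ S ∈ univ.powerset.filter (1 ≤ #·),
        (-1) ^ (#S + 1) * 2 ^ (#S - 1) * ∏ i ∈ S, v i := by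
  classical
  have hnonempty : (univ : Finset ι).powerset.filter (1 ≤ #·) = univ.powerset.erase ∅ := by
    ext S; simp [one_le_card, nonempty_iff_ne_empty]
  have hcoeff : ∀ S ∈ univ.powerset.erase ∅,
      2 * ((-1) ^ (#S + 1) * 2 ^ (#S - 1) * ∏ i ∈ S, v i) =
        -((-2) ^ #S * ∏ i ∈ S, v i) := by
    intro S hS
    obtain ⟨k, hk⟩ : ∃ k, #S = k + 1 :=
      Nat.exists_eq_add_one.2 (card_pos.2 (nonempty_iff_ne_empty.2 (ne_of_mem_erase hS)))
    rw [hk, Nat.add_sub_cancel, neg_pow (2 : ℤ)]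
    ring
  have hexpand : ∏ i, (1 - 2 * v i) = ∑ S ∈ univ.powerset, (-2) ^ #S * ∏ i ∈ S, v i := by
    simp_rw [sub_eq_add_neg, prod_one_add, neg_mul_eq_neg_mul, prod_mul_distrib, prod_const]
  refine mul_left_cancel₀ (two_ne_zero (α := ℤ)) ?_
  rw [two_mul_ite_odd, ← prod_one_sub_two_mul_eq_neg_one_pow _ _ fun i _ => hv i, hexpand,
    hnonempty, mul_sum, sum_congr rfl hcoeff, sum_neg_distrib,
    sum_erase_eq_sub (empty_mem_powerset _)]
  simp

theorem sum_filter_modEq_sum {ι : Type*} {s : Finset ι} {P : ι → Prop} [DecidablePred P]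
    {f : ι → ℤ} {n : ℤ} (h : ∀ i ∈ s, ¬ P i → n ∣ f i) :
    ∑ i ∈ s.filter P, f i ≡ ∑ i ∈ s, f i [ZMOD n] := by
  rw [sum_filter]
  refine Int.ModEq.sum fun i hi => ?_
  split_ifs with hP
  · rfl
  · exact (Int.modEq_zero_iff_dvd.2 (h i hi hP)).symm

theorem sum_ite_odd_mul_eq_sum_powerset {ι κ : Type*} [Fintype ι] [Fintype κ]
    (x : ι → κ → ℤ) (hx : ∀ i c, x i c = 0 ∨ x i c = 1) (p : κ → ℤ) :
    ∑ c, (if Odd #(univ.filter (x · c = 1)) then 1 else 0 : ℤ) * p c =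
      ∑ S ∈ univ.powerset.filter (1 ≤ #·),
        (-1) ^ (#S + 1) * 2 ^ (#S - 1) * ∑ c, (∏ i ∈ S, x i c) * p c := by
  simp_rw [ite_odd_card_eq_sum_powerset _ (hx · _), sum_mul, mul_sum, mul_assoc]
  exact sum_comm

theorem xor_weight_modEq_truncated_expansion_general
    (q m n : ℕ)
    (x : Fin m → Fin n → ℤ) (hx : ∀ i c, x i c = 0 ∨ x i c = 1)
    (p : Fin n → ℤ) :
    (∑ c, (if Odd (Finset.univ.filter (fun i => x i c = 1)).card then (1 : ℤ) else 0) * p c)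
      ≡
    (∑ S ∈ Finset.univ.powerset.filter
        (fun S : Finset (Fin m) => 1 ≤ S.card ∧ S.card ≤ q),
      (-1 : ℤ) ^ (S.card + 1) * 2 ^ (S.card - 1) * ∑ c, (∏ i ∈ S, x i c) * p c)
      [ZMOD (2 : ℤ) ^ q] := by
  rw [sum_ite_odd_mul_eq_sum_powerset x hx p, ← filter_filter]
  refine (sum_filter_modEq_sum fun S hS hSq => ?_).symm
  have hqS : q ≤ #S - 1 := by have := (mem_filter.1 hS).2; omega
  exact ((pow_dvd_pow 2 hqS).mul_left _).mul_right _

/-- **Truncated inclusion–exclusion for the weighted weight of an XOR of rows, mod `2^q`.**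
The rows `x i : Fin n → ℤ` are bit strings (entries 0 or 1); `⊕x` is their coordinatewise
XOR.  Then `∑_c (⊕x)(c)·p(c)` is congruent, modulo `2^q`, to the inclusion–exclusion
expansion truncated at subsets of size at most `q`. -/
theorem xor_weight_modEq_truncated_expansion
    (q m n : ℕ) (hq : 1 ≤ q)
    (x : Fin m → Fin n → ℤ) (hx : ∀ i c, x i c = 0 ∨ x i c = 1)
    (p : Fin n → ℤ) :
    (∑ c, (if Odd (Finset.univ.filter (fun i => x i c = 1)).card then (1 : ℤ) else 0) * p c)
      ≡
    (∑ S ∈ Finset.univ.powerset.filter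
        (fun S : Finset (Fin m) => 1 ≤ S.card ∧ S.card ≤ q),
      (-1 : ℤ) ^ (S.card + 1) * 2 ^ (S.card - 1) * ∑ c, (∏ i ∈ S, x i c) * p c)
      [ZMOD (2 : ℤ) ^ q] :=
  xor_weight_modEq_truncated_expansion_general q m n x hx p
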